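/- arXiv:2501.16285 — 4 statements merged into one kernel-verified Lean document; each statement's English description precedes it below -/
import Mathlib

section
/- (Eggleton's bound) For the Ulam sequence (a_n) with n ≥ 3, we have a_{n+1} ≤ a_n + a_{n-2}. -/
/-! The number `a n + a (n - 2)` exceeds `a n` and is a sum of two distinct earlier terms in
exactly one way: in any representation `a i + a j` with `i < j ≤ n`, monotonicity forces
`a i ≥ a (n - 2)`, so `i ∈ {n - 2, n - 1}`; `i = n - 1` makes the sum too large, and `i = n - 2`
forces `j = n`. Minimality of `a (n + 1)` then gives the bound. -/

/-- `m` has exactly one representation as `a i + a j` with `1 ≤ i < j ≤ n`. -/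
def UlamUniqueRep (a : ℕ → ℕ) (n m : ℕ) : Prop :=
  ∃! p : ℕ × ℕ, 1 ≤ p.1 ∧ p.1 < p.2 ∧ p.2 ≤ n ∧ a p.1 + a p.2 = m

/-- `a` (indexed from 1) is the Ulam sequence: `a 1 = 1`, `a 2 = 2`, and for `n ≥ 2`,
`a (n+1)` is the least integer exceeding `a n` uniquely representable as the sum of
two distinct earlier terms. -/
def IsUlamSeq (a : ℕ → ℕ) : Prop :=
  a 1 = 1 ∧ a 2 = 2 ∧
    ∀ n, 2 ≤ n → IsLeast {m | a n < m ∧ UlamUniqueRep a n m} (a (n + 1))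

theorem StrictMonoOn.ulamUniqueRep_add_two {a : ℕ → ℕ} (ha : StrictMonoOn a (Set.Ici 1))
    {k : ℕ} (hk : 1 ≤ k) : UlamUniqueRep a (k + 2) (a (k + 2) + a k) := by
  refine ⟨(k, k + 2), ⟨hk, by omega, le_rfl, add_comm _ _⟩, ?_⟩
  rintro ⟨i, j⟩ ⟨hi, hij, hj, hsum⟩
  dsimp only at hi hij hj hsum
  have hj1 : 1 ≤ j := by omega
  have haj : a j ≤ a (k + 2) := ha.monotoneOn hj1 (by omega : 1 ≤ k + 2) hj
  have hki : k ≤ i := (ha.le_iff_le hk hi).1 (by omega)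
  obtain rfl | rfl : k = i ∨ k + 1 = i := by omega
  · have : a j = a (k + 2) := by omega
    rw [ha.injOn hj1 (by omega : 1 ≤ k + 2) this]
  · obtain rfl : j = k + 2 := by omega
    have : a k < a (k + 1) := ha hk (by omega : 1 ≤ k + 1) (by omega)
    omega

namespace IsUlamSeq

variable {a : ℕ → ℕ}

theorem lt_add_one (ha : IsUlamSeq a) {m : ℕ} (hm : 1 ≤ m) : a m < a (m + 1) := by
  obtain ⟨h1, h2, hleast⟩ := ha
  obtain rfl | hm := hm.eq_or_lt
  · rw [h1, h2]
    decide
  · exact (hleast m hm).1.1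

theorem strictMonoOn (ha : IsUlamSeq a) : StrictMonoOn a (Set.Ici 1) :=
  strictMonoOn_of_lt_add_one Set.ordConnected_Ici fun _ _ hm _ ↦ ha.lt_add_one hm

theorem pos (ha : IsUlamSeq a) {m : ℕ} (hm : 1 ≤ m) : 0 < a m :=
  calc 0 < a 1 := by rw [ha.1]; exact one_pos
    _ ≤ a m := ha.strictMonoOn.monotoneOn Set.self_mem_Ici hm hm

end IsUlamSeq

/-- Eggleton's bound for the Ulam sequence. -/
theorem ulam_eggleton (a : ℕ → ℕ) (ha : IsUlamSeq a) (n : ℕ) (hn : 3 ≤ n) :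
    a (n + 1) ≤ a n + a (n - 2) := by
  obtain ⟨k, rfl⟩ : ∃ k, n = k + 2 := ⟨n - 2, by omega⟩
  have hk : 1 ≤ k := by omega
  exact (ha.2.2 (k + 2) (by omega)).2
    ⟨Nat.lt_add_of_pos_right (ha.pos hk), ha.strictMonoOn.ulamUniqueRep_add_two hk⟩
end

section
/- Eggleton's bound cannot be attained twice in a row in the Ulam sequence: there is no n such that both a_{n+1} = a_n + a_{n-2} and a_{n+2} = a_{n+1} + a_{n-1}. -/
namespace IsUlamSeq

variable {a : ℕ → ℕ} (ha : IsUlamSeq a)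
include ha

theorem strictMono_succ : StrictMono fun k => a (k + 1) := by
  refine strictMono_nat_of_lt_succ fun k => ?_
  rcases Nat.eq_zero_or_pos k with rfl | hk
  · simp [ha.1, ha.2.1]
  · exact (ha.2.2 (k + 1) (by omega)).1.1

theorem lt_iff_lt {i j : ℕ} (hi : 1 ≤ i) (hj : 1 ≤ j) : a i < a j ↔ i < j := by
  obtain ⟨i, rfl⟩ := Nat.exists_eq_add_of_le' hi
  obtain ⟨j, rfl⟩ := Nat.exists_eq_add_of_le' hj
  simpa using ha.strictMono_succ.lt_iff_lt

theorem le_iff_le {i j : ℕ} (hi : 1 ≤ i) (hj : 1 ≤ j) : a i ≤ a j ↔ i ≤ j := by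
  simpa only [not_lt] using (ha.lt_iff_lt hj hi).not

theorem eq_iff_eq {i j : ℕ} (hi : 1 ≤ i) (hj : 1 ≤ j) : a i = a j ↔ i = j := by
  simp only [le_antisymm_iff, ha.le_iff_le hi hj, ha.le_iff_le hj hi]

theorem one_le {k : ℕ} (hk : 1 ≤ k) : 1 ≤ a k := by
  simpa [ha.1] using (ha.le_iff_le le_rfl hk).2 hk

theorem succ_le_add {i m : ℕ} (hi : 1 ≤ i) (him : i < m)
    (hbelow : ∀ p q, 1 ≤ p → p < q → q < m → a p + a q ≠ a i + a m) :
    a (m + 1) ≤ a i + a m := by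
  refine (ha.2.2 m (by omega)).2 ⟨by linarith [ha.one_le hi], (i, m), ⟨hi, him, le_rfl, rfl⟩, ?_⟩
  rintro ⟨p, q⟩ ⟨hp, hpq, hqm, hsum⟩
  obtain rfl : q = m := by
    by_contra hq
    exact hbelow p q hp hpq (by omega) hsum
  obtain rfl : p = i := (ha.eq_iff_eq hp hi).1 (by simpa using hsum)
  rfl

theorem three : a 3 = 3 := by
  have hle : a 3 ≤ a 1 + a 2 := ha.succ_le_add le_rfl one_lt_two (by omega)
  have hlt : a 2 < a 3 := (ha.lt_iff_lt (by norm_num) (by norm_num)).2 (by norm_num)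
  have h1 := ha.1
  have h2 := ha.2.1
  omega

theorem eggleton {n : ℕ} (hn : 1 ≤ n) : a (n + 3) ≤ a (n + 2) + a n := by
  rw [add_comm (a _)]
  refine ha.succ_le_add (m := n + 2) hn (by omega) fun p q hp hpq hq => ?_
  have hp' : a p ≤ a n := (ha.le_iff_le hp hn).2 (by omega)
  have hq' : a q ≤ a (n + 1) := (ha.le_iff_le (by omega) (by omega)).2 (by omega)
  have hn' : a (n + 1) < a (n + 2) := (ha.lt_iff_lt (by omega) (by omega)).2 (by omega)
  omega

theorem succ_lt_two_mul {n : ℕ} (hn : 2 ≤ n) : a (n + 1) < 2 * a n := by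
  obtain rfl | hn := hn.eq_or_lt
  · simp [ha.three, ha.2.1]
  obtain ⟨k, rfl⟩ : ∃ k, n = k + 2 := ⟨n - 2, by omega⟩
  have hk : a k < a (k + 2) := (ha.lt_iff_lt (by omega) (by omega)).2 (by omega)
  linarith [ha.eggleton (n := k) (by omega)]

end IsUlamSeq

/-- Eggleton's bound cannot be attained twice in a row. -/
theorem ulam_eggleton_not_twice (a : ℕ → ℕ) (ha : IsUlamSeq a) :
    ¬ ∃ n, 4 ≤ n ∧ a (n + 1) = a n + a (n - 2) ∧ a (n + 2) = a (n + 1) + a (n - 1) := by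
  rintro ⟨n, hn, h1, h2⟩
  obtain ⟨k, rfl⟩ : ∃ k, n = k + 4 := ⟨n - 4, by omega⟩
  simp only [show k + 4 - 2 = k + 2 by omega, show k + 4 - 1 = k + 3 by omega, Nat.add_assoc,
    Nat.reduceAdd] at h1 h2
  have hlt : a (k + 2) < a (k + 3) := (ha.lt_iff_lt (by omega) (by omega)).2 (by omega)
  have hsecond : ∃ p q, 1 ≤ p ∧ p < q ∧ q < k + 5 ∧ a p + a q = a (k + 2) + a (k + 5) := by
    by_contra! hbelow
    have hnext : a (k + 6) ≤ a (k + 2) + a (k + 5) :=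
      ha.succ_le_add (i := k + 2) (m := k + 5) (by omega) (by omega) hbelow
    omega
  obtain ⟨p, q, hp, hpq, hq, hsum⟩ := hsecond
  have hp' : a p ≤ a (k + 3) := (ha.le_iff_le hp (by omega)).2 (by omega)
  have hq' : a q ≤ a (k + 4) := (ha.le_iff_le (by omega) (by omega)).2 (by omega)
  have hgrowth : a (k + 3) < 2 * a (k + 2) := ha.succ_lt_two_mul (by omega)
  omega
end

section
/- The spectral radius of the matrix product W = T_3 T_1^2 satisfies ρ(W)^{1/3} > 1.414, and in fact ρ(W)^{1/3} ≈ 1.4146 is the cube root of the largest real root of the characteristic polynomial of T_3 T_1^2. -/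
/-!
The second column of `W = T3 * T1 ^ 2` vanishes, so `charpoly W = X * (X ^ 3 - 2 X ^ 2 - 2 X - 1)`.
The cubic changes sign on `[2.83, 3]`, giving a real root `ρ ≥ 2.83 > 1.414 ^ 3`. For any complex
root `μ`, the triangle inequality gives `‖μ‖ ^ 3 ≤ 2 ‖μ‖ ^ 2 + 2 ‖μ‖ + 1`, and since
`t ^ 3 - 2 t ^ 2 - 2 t - 1` increases past `ρ ≥ 2`, this forces `‖μ‖ ≤ ρ`. Hence `ρ` is an
eigenvalue of maximal modulus, i.e. `ρ(W) = ρ`.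
-/

open Matrix

/-- Type I matrix: `b_{n+1} = b_n + b_{n-3}` (complex entries, for the spectrum). -/
def T1 : Matrix (Fin 4) (Fin 4) ℂ := !![1,0,0,1; 1,0,0,0; 0,1,0,0; 0,0,1,0]

/-- Eggleton matrix: `b_{n+1} = b_n + b_{n-2}`. -/
def T3 : Matrix (Fin 4) (Fin 4) ℂ := !![1,0,1,0; 1,0,0,0; 0,1,0,0; 0,0,1,0]

theorem spectralRadius_eq_ofReal_norm_of_forall_norm_le {𝕜 A : Type*} [NormedField 𝕜]
    [Ring A] [Algebra 𝕜 A] {a : A} {μ : 𝕜} (hμ : μ ∈ spectrum 𝕜 a)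
    (h : ∀ ν ∈ spectrum 𝕜 a, ‖ν‖ ≤ ‖μ‖) : spectralRadius 𝕜 a = ENNReal.ofReal ‖μ‖ := by
  rw [ofReal_norm, enorm_eq_nnnorm]
  refine le_antisymm (iSup₂_le fun ν hν => ?_) (le_iSup₂ (f := fun ν _ => (‖ν‖₊ : ENNReal)) μ hμ)
  exact_mod_cast h ν hν

theorem norm_pow_three_le_of_pow_three_eq {𝕜 : Type*} [RCLike 𝕜] {μ : 𝕜}
    (h : μ ^ 3 = 2 * μ ^ 2 + 2 * μ + 1) : ‖μ‖ ^ 3 ≤ 2 * ‖μ‖ ^ 2 + 2 * ‖μ‖ + 1 :=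
  calc ‖μ‖ ^ 3 = ‖2 * μ ^ 2 + 2 * μ + 1‖ := by rw [← h, norm_pow]
    _ ≤ ‖2 * μ ^ 2‖ + ‖2 * μ‖ + ‖(1 : 𝕜)‖ := norm_add₃_le
    _ = 2 * ‖μ‖ ^ 2 + 2 * ‖μ‖ + 1 := by simp [norm_mul, norm_pow]

theorem le_of_pow_three_le_of_pow_three_eq {ρ t : ℝ} (hρ : 2 ≤ ρ)
    (hρ3 : ρ ^ 3 = 2 * ρ ^ 2 + 2 * ρ + 1) (ht : t ^ 3 ≤ 2 * t ^ 2 + 2 * t + 1) : t ≤ ρ := by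
  by_contra! hlt
  have hdiff : 0 < (t - ρ) * (t ^ 2 + t * ρ + ρ ^ 2 - 2 * t - 2 * ρ - 2) :=
    mul_pos (by linarith) (by nlinarith)
  nlinarith

theorem exists_pow_three_eq_ge : ∃ ρ : ℝ, 2.83 ≤ ρ ∧ ρ ^ 3 = 2 * ρ ^ 2 + 2 * ρ + 1 := by
  have hcont : ContinuousOn (fun t : ℝ => t ^ 3 - (2 * t ^ 2 + 2 * t + 1)) (Set.Icc 2.83 3) := by
    fun_prop
  obtain ⟨ρ, hρ, hρ0⟩ := intermediate_value_Icc (by norm_num) hcont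
    (show (0 : ℝ) ∈ Set.Icc _ _ by norm_num)
  exact ⟨ρ, hρ.1, sub_eq_zero.1 hρ0⟩

theorem T3_mul_T1_sq : T3 * T1 ^ 2 = !![2,0,1,1; 1,0,1,1; 1,0,0,1; 1,0,0,0] := by
  rw [sq]
  ext i j
  fin_cases i <;> fin_cases j <;> simp [T1, T3, mul_apply, Fin.sum_univ_four, one_add_one_eq_two]

open Polynomial in
theorem charpoly_T3_mul_T1_sq :
    (T3 * T1 ^ 2).charpoly = X * (X ^ 3 - 2 * X ^ 2 - 2 * X - 1) := by
  rw [T3_mul_T1_sq, charpoly, det_succ_row_zero]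
  simp [Fin.sum_univ_succ, det_fin_three, charmatrix_apply, Fin.succAbove, submatrix,
    diagonal_apply, map_ofNat]
  ring

theorem isRoot_charpoly_T3_mul_T1_sq_iff {μ : ℂ} :
    (T3 * T1 ^ 2).charpoly.IsRoot μ ↔ μ = 0 ∨ μ ^ 3 = 2 * μ ^ 2 + 2 * μ + 1 := by
  simp [charpoly_T3_mul_T1_sq, sub_eq_zero, sub_sub]

/-- The spectral radius of `W = T3 * T1 ^ 2` satisfies `ρ(W)^{1/3} > 1.414`,
i.e. `ρ(W) > 1.414 ^ 3`, and `ρ(W)` is the largest real root of the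
characteristic polynomial of `W`. -/
theorem spectral_radius_T3T1sq :
    ENNReal.ofReal (1.414 ^ 3) < spectralRadius ℂ (T3 * T1 ^ 2) ∧
      ∃ ρ : ℝ, spectralRadius ℂ (T3 * T1 ^ 2) = ENNReal.ofReal ρ ∧
        (Matrix.charpoly (T3 * T1 ^ 2)).IsRoot (ρ : ℂ) ∧
        ∀ x : ℝ, (Matrix.charpoly (T3 * T1 ^ 2)).IsRoot (x : ℂ) → x ≤ ρ := by
  obtain ⟨ρ, hρ_ge, hρ⟩ := exists_pow_three_eq_ge
  have hρ_norm : ‖(ρ : ℂ)‖ = ρ := by rw [Complex.norm_real, Real.norm_of_nonneg (by linarith)]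
  have hroot : (T3 * T1 ^ 2).charpoly.IsRoot (ρ : ℂ) :=
    isRoot_charpoly_T3_mul_T1_sq_iff.2 (Or.inr (by exact_mod_cast hρ))
  have hbound : ∀ μ : ℂ, (T3 * T1 ^ 2).charpoly.IsRoot μ → ‖μ‖ ≤ ρ := by
    intro μ hμ
    rcases isRoot_charpoly_T3_mul_T1_sq_iff.1 hμ with rfl | hμ
    · rw [norm_zero]; linarith
    · exact le_of_pow_three_le_of_pow_three_eq (by linarith) hρ
        (norm_pow_three_le_of_pow_three_eq hμ)
  have hsr : spectralRadius ℂ (T3 * T1 ^ 2) = ENNReal.ofReal ρ := by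
    have := spectralRadius_eq_ofReal_norm_of_forall_norm_le
      (mem_spectrum_iff_isRoot_charpoly.2 hroot) fun ν hν =>
        hρ_norm.symm ▸ hbound ν (mem_spectrum_iff_isRoot_charpoly.1 hν)
    rwa [hρ_norm] at this
  refine ⟨?_, ρ, hsr, hroot, fun x hx => ?_⟩
  · rw [hsr, ENNReal.ofReal_lt_ofReal_iff (by linarith)]
    norm_num
    linarith
  · calc x ≤ ‖(x : ℂ)‖ := (Complex.norm_real x).symm ▸ Real.le_norm_self x
      _ ≤ ρ := hbound x hx
end

section
/- (Small gaps in the Ulam sequence) There exists a constant c > 0 such that for all integers n ≥ 2, min over 1 ≤ k ≤ n of a_{k+1}/a_k ≤ 1 + c · (log n)/n, where (a_k) is the Ulam sequence. -/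
/-!
Suppose every ratio `a (k + 1) / a k` with `k ≤ n` exceeds `1 + δ`, where `δ = 128 log n / n`.
With `d = ⌊n / 8⌋`, `h = n - 3d` and `l = n - 2d`, the terms then grow so fast that every gap
`a (j + 1) - a j` with `j ≥ l` exceeds `a h`. Consequently the sums `a i + a j` with
`i ≤ h < l < j ≤ n` are pairwise distinct and smaller than `a (n + 1)`. Such a sum that is not
a term lies strictly between two consecutive terms `a k < s < a (k + 1)` with `k ≤ n`, so by the
Ulam rule it has a second representation, and the size of the gaps forces both of its indices
into `(h, n]`. Counting gives `h (n - l) ≤ (n + 1) + (n - h)²`, that is `10 d² ≲ 9 d² + n`,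
which fails once `n ≥ 80`. When `n ≤ 128 log n` (in particular when `n < 80`) the ratio
`a 2 / a 1 = 2` is already small enough.
-/

open Finset Real

lemma one_le_mul_one_add_pow {δ : ℝ} {d : ℕ} (hδ0 : 0 < δ) (hδ1 : δ ≤ 1)
    (h : log δ⁻¹ ≤ d * δ / 2) : 1 ≤ δ * (1 + δ) ^ d := by
  have hlog : δ / 2 ≤ log (1 + δ) := by
    refine le_trans ?_ (le_log_one_add_of_nonneg hδ0.le)
    rw [le_div_iff₀ (by linarith)]
    nlinarith
  have hle : log δ⁻¹ ≤ log ((1 + δ) ^ d) := by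
    rw [log_pow]
    nlinarith [(Nat.cast_nonneg d : (0 : ℝ) ≤ d)]
  have hinv := (log_le_log_iff (inv_pos.2 hδ0) (by positivity)).1 hle
  calc 1 = δ * δ⁻¹ := (mul_inv_cancel₀ hδ0.ne').symm
    _ ≤ δ * (1 + δ) ^ d := mul_le_mul_of_nonneg_left hinv hδ0.le

lemma one_le_mul_one_add_pow_div_eight {n : ℕ} (hn : 16 ≤ n) (hlog : 128 * log n < n) :
    1 ≤ 128 * log n / n * (1 + 128 * log n / n) ^ (n / 8) := by
  have hn0 : (0 : ℝ) < n := by positivity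
  have hlog2 : log 2 ≤ log n := log_le_log (by norm_num) (by exact_mod_cast (by omega : 2 ≤ n))
  have hL : 1 ≤ 128 * log n := by linarith [log_two_gt_d9]
  have hd : (n : ℝ) ≤ 16 * (n / 8 : ℕ) := by exact_mod_cast (by omega : n ≤ 16 * (n / 8))
  refine one_le_mul_one_add_pow (by positivity) ((div_le_one hn0).2 hlog.le) ?_
  calc log (128 * log n / n)⁻¹ ≤ log n := by
        rw [inv_div]
        exact log_le_log (by positivity) (div_le_self hn0.le hL)
    _ ≤ (n / 8 : ℕ) * (128 * log n / n) / 2 := by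
        rw [le_div_iff₀ two_pos, mul_div_assoc', le_div_iff₀ hn0]
        nlinarith

section Growth

variable {a : ℕ → ℕ} {n : ℕ} {δ : ℝ}

lemma strictMonoOn_of_growth (hδ : 0 ≤ δ)
    (hgrow : ∀ k, 1 ≤ k → k ≤ n → (1 + δ) * a k < a (k + 1)) :
    StrictMonoOn a (Set.Icc 1 (n + 1)) := by
  refine strictMonoOn_of_lt_add_one Set.ordConnected_Icc fun k _ hk hk1 => ?_
  have hlt := hgrow k hk.1 (by simp only [Set.mem_Icc] at hk1; omega)
  exact_mod_cast (le_mul_of_one_le_left (Nat.cast_nonneg _) (by linarith)).trans_lt hlt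

lemma pow_mul_le_of_growth (hδ : 0 ≤ δ)
    (hgrow : ∀ k, 1 ≤ k → k ≤ n → (1 + δ) * a k < a (k + 1)) {i : ℕ} (hi : 1 ≤ i) :
    ∀ t, i + t ≤ n + 1 → (1 + δ) ^ t * a i ≤ a (i + t)
  | 0, _ => by simp
  | t + 1, ht =>
    calc (1 + δ) ^ (t + 1) * a i = (1 + δ) * ((1 + δ) ^ t * a i) := by ring
      _ ≤ (1 + δ) * a (i + t) :=
        mul_le_mul_of_nonneg_left (pow_mul_le_of_growth hδ hgrow hi t (by omega)) (by linarith)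
      _ ≤ a (i + (t + 1)) := (hgrow (i + t) (by omega) (by omega)).le

lemma add_lt_of_growth (hδ : 0 ≤ δ)
    (hgrow : ∀ k, 1 ≤ k → k ≤ n → (1 + δ) * a k < a (k + 1)) {h d j : ℕ} (hh : 1 ≤ h)
    (hδd : 1 ≤ δ * (1 + δ) ^ d) (hj : h + d ≤ j) (hjn : j ≤ n) : a j + a h < a (j + 1) := by
  obtain ⟨t, rfl⟩ : ∃ t, j = h + t := ⟨j - h, by omega⟩
  have hpow : (1 + δ) ^ d ≤ (1 + δ) ^ t := pow_le_pow_right₀ (by linarith) (by omega)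
  have hah : (a h : ℝ) ≤ δ * a (h + t) :=
    calc (a h : ℝ) ≤ δ * (1 + δ) ^ d * a h := le_mul_of_one_le_left (Nat.cast_nonneg _) hδd
      _ ≤ δ * ((1 + δ) ^ t * a h) := by
        rw [mul_assoc]; gcongr
      _ ≤ δ * a (h + t) := by gcongr; exact pow_mul_le_of_growth hδ hgrow hh t (by omega)
  have hstep := hgrow (h + t) (by omega) hjn
  exact_mod_cast (by linarith : (a (h + t) : ℝ) + a h < a (h + t + 1))

end Growth

lemma exists_le_lt_add_one {α : Type*} [LinearOrder α] (f : ℕ → α) {s : α} {j : ℕ} :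
    ∀ {n}, j ≤ n → f j ≤ s → s < f (n + 1) → ∃ k, j ≤ k ∧ k ≤ n ∧ f k ≤ s ∧ s < f (k + 1)
  | 0, hj, hjs, hs => ⟨0, hj, le_rfl, by rwa [Nat.le_zero.1 hj] at hjs, hs⟩
  | n + 1, hj, hjs, hs => by
    rcases le_or_gt (f (n + 1)) s with hle | hlt
    · exact ⟨n + 1, hj, le_rfl, hle, hs⟩
    · rcases Nat.lt_or_eq_of_le hj with hj' | rfl
      · obtain ⟨k, hk⟩ := exists_le_lt_add_one f (Nat.le_of_lt_succ hj') hjs hlt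
        exact ⟨k, hk.1, by omega, hk.2.2⟩
      · exact absurd hjs (not_le.2 hlt)

lemma IsUlamSeq.not_uniqueRep {a : ℕ → ℕ} (ha : IsUlamSeq a) {k m : ℕ} (hk : 2 ≤ k)
    (hkm : a k < m) (hm : m < a (k + 1)) : ¬ UlamUniqueRep a k m :=
  fun hu => ((ha.2.2 k hk).2 ⟨hkm, hu⟩).not_gt hm

section Pairs

variable {a : ℕ → ℕ} {n h l : ℕ}

lemma add_lt_add_of_large_gaps (hmono : StrictMonoOn a (Set.Icc 1 (n + 1)))
    (hgap : ∀ j, l ≤ j → j ≤ n → a j + a h < a (j + 1)) (hhl : h < l) {i i' j j' : ℕ}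
    (hi' : 1 ≤ i') (hi'h : i' ≤ h) (hj' : 1 ≤ j') (hj'j : j' < j) (hlj : l < j) (hjn : j ≤ n + 1) :
    a i' + a j' < a i + a j := by
  obtain ⟨j, rfl⟩ : ∃ j₀, j = j₀ + 1 := ⟨j - 1, by omega⟩
  have h₁ : a i' ≤ a h := hmono.monotoneOn ⟨hi', by omega⟩ ⟨by omega, by omega⟩ hi'h
  have h₂ : a j' ≤ a j := hmono.monotoneOn ⟨hj', by omega⟩ ⟨by omega, by omega⟩ (by omega)
  have h₃ := hgap j (by omega) (by omega)
  omega

lemma injOn_add_pairs (hmono : StrictMonoOn a (Set.Icc 1 (n + 1)))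
    (hgap : ∀ j, l ≤ j → j ≤ n → a j + a h < a (j + 1)) (hhl : h < l) :
    Set.InjOn (fun p : ℕ × ℕ => a p.1 + a p.2) ↑(Icc 1 h ×ˢ Icc (l + 1) n) := by
  rintro ⟨i, j⟩ hp ⟨i', j'⟩ hq heq
  simp only [coe_product, coe_Icc, Set.mem_prod, Set.mem_Icc] at hp hq heq
  rcases lt_trichotomy j j' with hjj | rfl | hjj
  · exact absurd heq (add_lt_add_of_large_gaps hmono hgap hhl hp.1.1 hp.1.2 (by omega) hjj
      (by omega) (by omega)).ne
  · have hii : a i = a i' := by omega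
    rw [hmono.injOn ⟨hp.1.1, by omega⟩ ⟨hq.1.1, by omega⟩ hii]
  · exact absurd heq (add_lt_add_of_large_gaps hmono hgap hhl hq.1.1 hq.1.2 (by omega) hjj
      (by omega) (by omega)).ne'

lemma IsUlamSeq.add_mem_image_or_mem_image_high (ha : IsUlamSeq a)
    (hmono : StrictMonoOn a (Set.Icc 1 (n + 1)))
    (hgap : ∀ j, l ≤ j → j ≤ n → a j + a h < a (j + 1)) (hhl : h < l) {i j : ℕ}
    (hi : 1 ≤ i) (hih : i ≤ h) (hlj : l < j) (hjn : j ≤ n) :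
    a i + a j ∈ (Icc 1 (n + 1)).image a ∨
      a i + a j ∈ (Icc (h + 1) n ×ˢ Icc (h + 1) n).image (fun q => a q.1 + a q.2) := by
  refine or_iff_not_imp_left.2 fun hterm => ?_
  have hih' : a i ≤ a h := hmono.monotoneOn ⟨hi, by omega⟩ ⟨by omega, by omega⟩ hih
  have hjn' : a j ≤ a n := hmono.monotoneOn ⟨by omega, by omega⟩ ⟨by omega, by omega⟩ hjn
  have htop := hgap n (by omega) le_rfl
  obtain ⟨k, hjk, hkn, hks, hsk⟩ :=
    exists_le_lt_add_one a hjn (Nat.le_add_left _ _) (by omega : a i + a j < a (n + 1))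
  have hks' : a k < a i + a j :=
    hks.lt_of_ne fun he => hterm (mem_image.2 ⟨k, mem_Icc.2 ⟨by omega, by omega⟩, he⟩)
  obtain ⟨q, ⟨hq₁, hq₁₂, hq₂, hqs⟩, hqne⟩ : ∃ q : ℕ × ℕ,
      (1 ≤ q.1 ∧ q.1 < q.2 ∧ q.2 ≤ k ∧ a q.1 + a q.2 = a i + a j) ∧ q ≠ (i, j) := by
    by_contra! hq
    exact ha.not_uniqueRep (by omega) hks' hsk ⟨(i, j), ⟨hi, by omega, hjk, rfl⟩, hq⟩
  rcases lt_trichotomy q.2 j with hqj | hqj | hqj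
  · have hhq : h < q.1 := by
      by_contra! hqh
      exact (add_lt_add_of_large_gaps hmono hgap hhl hq₁ hqh (by omega) hqj hlj (by omega)).ne hqs
    exact mem_image.2
      ⟨q, mem_product.2 ⟨mem_Icc.2 ⟨hhq, by omega⟩, mem_Icc.2 ⟨by omega, by omega⟩⟩, hqs⟩
  · have hqi : q.1 = i := hmono.injOn ⟨hq₁, by omega⟩ ⟨hi, by omega⟩ (by rw [hqj] at hqs; omega)
    exact absurd (Prod.ext hqi hqj) hqne
  · exact absurd hqs (add_lt_add_of_large_gaps hmono hgap hhl hi hih (by omega) hqj (by omega)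
      (by omega)).ne'

lemma IsUlamSeq.card_pairs_le (ha : IsUlamSeq a)
    (hmono : StrictMonoOn a (Set.Icc 1 (n + 1)))
    (hgap : ∀ j, l ≤ j → j ≤ n → a j + a h < a (j + 1)) (hhl : h < l) :
    h * (n - l) ≤ (n + 1) + (n - h) ^ 2 := by
  set f : ℕ × ℕ → ℕ := fun p => a p.1 + a p.2
  have hsub : (Icc 1 h ×ˢ Icc (l + 1) n).image f ⊆
      (Icc 1 (n + 1)).image a ∪ (Icc (h + 1) n ×ˢ Icc (h + 1) n).image f := by
    simp only [subset_iff, mem_image, mem_product, mem_Icc, Prod.exists]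
    rintro _ ⟨i, j, ⟨⟨hi, hih⟩, hlj, hjn⟩, rfl⟩
    exact mem_union.2 (ha.add_mem_image_or_mem_image_high hmono hgap hhl hi hih hlj hjn)
  calc h * (n - l) = #((Icc 1 h ×ˢ Icc (l + 1) n).image f) := by
        rw [card_image_of_injOn (injOn_add_pairs hmono hgap hhl), card_product]
        simp
    _ ≤ #((Icc 1 (n + 1)).image a) + #((Icc (h + 1) n ×ˢ Icc (h + 1) n).image f) :=
        (card_le_card hsub).trans (card_union_le _ _)
    _ ≤ (n + 1) + (n - h) ^ 2 := by
        gcongr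
        · exact card_image_le.trans (by simp)
        · exact card_image_le.trans (by simp [sq])

end Pairs

lemma IsUlamSeq.exists_succ_le_mul {a : ℕ → ℕ} {n : ℕ} {δ : ℝ} (ha : IsUlamSeq a)
    (hδ : 0 ≤ δ) (hn : 80 ≤ n) (hδd : 1 ≤ δ * (1 + δ) ^ (n / 8)) :
    ∃ k, 1 ≤ k ∧ k ≤ n ∧ (a (k + 1) : ℝ) ≤ (1 + δ) * a k := by
  by_contra! hgrow
  set d := n / 8 with hd
  have hgap (j : ℕ) (hj : n - 2 * d ≤ j) (hjn : j ≤ n) : a j + a (n - 3 * d) < a (j + 1) :=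
    add_lt_of_growth hδ hgrow (by omega) hδd (by omega) hjn
  have hcount := ha.card_pairs_le (strictMonoOn_of_growth hδ hgrow) hgap (by omega)
  obtain ⟨r, hr, hnr⟩ : ∃ r, r < 8 ∧ n = 8 * d + r := ⟨n % 8, Nat.mod_lt _ (by norm_num), by omega⟩
  rw [show n - 3 * d = 5 * d + r by omega, show n - (n - 2 * d) = 2 * d by omega,
    show n - (5 * d + r) = 3 * d by omega, hnr] at hcount
  nlinarith

/-- Theorem 2: small gaps in the Ulam sequence. There exists `c > 0` such that for
every `n ≥ 2` some consecutive ratio `a (k+1) / a k` with `1 ≤ k ≤ n` is at most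
`1 + c * log n / n`. -/
theorem ulam_small_gaps (a : ℕ → ℕ) (ha : IsUlamSeq a) :
    ∃ c : ℝ, 0 < c ∧ ∀ n : ℕ, 2 ≤ n →
      ∃ k, 1 ≤ k ∧ k ≤ n ∧
        (a (k + 1) : ℝ) / (a k : ℝ) ≤ 1 + c * Real.log n / n := by
  refine ⟨128, by norm_num, fun n hn => ?_⟩
  have hn0 : (0 : ℝ) < n := by positivity
  have hlog2 : log 2 ≤ log n := log_le_log (by norm_num) (by exact_mod_cast hn)
  rcases le_or_gt (n : ℝ) (128 * log n) with hsmall | hbig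
  · refine ⟨1, le_rfl, hn.trans' (by norm_num), ?_⟩
    have hδ : 1 ≤ 128 * log n / n := (one_le_div hn0).2 hsmall
    rw [ha.2.1, ha.1]
    norm_num
    linarith
  · have h80 : 80 ≤ n := by
      by_contra! h
      have : (n : ℝ) < 80 := by exact_mod_cast h
      linarith [log_two_gt_d9]
    obtain ⟨k, hk1, hkn, hk⟩ := ha.exists_succ_le_mul (by positivity) h80
      (one_le_mul_one_add_pow_div_eight (by omega) hbig)
    exact ⟨k, hk1, hkn, div_le_of_le_mul₀ (Nat.cast_nonneg _) (by positivity) hk⟩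
end
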